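/- Let X and Y be random variables on a probability space taking only the values 1 and −1, with positive variances, and exchangeable, i.e. P(X = 1, Y = −1) = P(X = −1, Y = 1). Then the following are equivalent: (i) there exist a probability space Ω′, random variables X′, Y′ on Ω′ with values in {−1, 1} such that the joint law of (X′, Y′) equals the joint law of (X, Y), and a real-valued random variable Λ on Ω′ such that almost surely E[X′Y′ | σ(Λ)] = E[X′ | σ(Λ)] · E[Y′ | σ(Λ)] and E[X′ | σ(Λ)] = E[Y′ | σ(Λ)]; (ii) the covariance of X and Y is nonnegative, i.e. E[XY] − E[X]E[Y] ≥ 0. -/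

import Mathlib

open MeasureTheory ProbabilityTheory


/-- integral of a ±1-valued r.v. -/
lemma SZ.integral_pm {Ω : Type*} [MeasurableSpace Ω] (μ : Measure Ω) [IsProbabilityMeasure μ]
    (X : Ω → ℝ) (hs : MeasurableSet {ω | X ω = 1}) (hval : ∀ ω, X ω = 1 ∨ X ω = -1) :
    ∫ ω, X ω ∂μ = 2 * (μ {ω | X ω = 1}).toReal - 1 := by
  have hpt : ∀ ω, X ω = 2 * Set.indicator {ω | X ω = 1} (fun _ => (1:ℝ)) ω - 1 := by
    intro ω
    rcases hval ω with h | h <;> simp [Set.indicator_apply, h] <;> norm_num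
  have hint : Integrable (Set.indicator {ω | X ω = 1} (fun _ => (1:ℝ))) μ :=
    (integrable_const (1:ℝ)).indicator hs
  calc ∫ ω, X ω ∂μ
      = ∫ ω, (2 * Set.indicator {ω | X ω = 1} (fun _ => (1:ℝ)) ω - 1) ∂μ :=
        integral_congr_ae (Filter.EventuallyEq.of_eq (funext hpt))
    _ = 2 * (μ {ω | X ω = 1}).toReal - 1 := by
        rw [integral_sub (hint.const_mul 2) (integrable_const 1), integral_const_mul,
          integral_indicator_const (1:ℝ) hs, integral_const]
        simp [measureReal_def]

lemma SZ.forward_core {Ω' : Type} [m0 : MeasurableSpace Ω'] (P : Measure Ω')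
    [IsProbabilityMeasure P] (X' Y' Λ : Ω' → ℝ)
    (hX' : Measurable X') (hY' : Measurable Y') (hΛ : Measurable Λ)
    (hXv : ∀ ω, X' ω = 1 ∨ X' ω = -1) (hYv : ∀ ω, Y' ω = 1 ∨ Y' ω = -1)
    (hfact : MeasureTheory.condExp (MeasurableSpace.comap Λ inferInstance) P
          (fun ω => X' ω * Y' ω)
        =ᵐ[P] fun ω =>
          MeasureTheory.condExp (MeasurableSpace.comap Λ inferInstance) P X' ω *
          MeasureTheory.condExp (MeasurableSpace.comap Λ inferInstance) P Y' ω)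
    (hsym : MeasureTheory.condExp (MeasurableSpace.comap Λ inferInstance) P X'
        =ᵐ[P] MeasureTheory.condExp (MeasurableSpace.comap Λ inferInstance) P Y') :
    0 ≤ (∫ ω, X' ω * Y' ω ∂P) - (∫ ω, X' ω ∂P) * (∫ ω, Y' ω ∂P) := by
  set m := MeasurableSpace.comap Λ inferInstance with hmdef
  have hm : m ≤ m0 := hΛ.comap_le
  have hXn : ∀ ω, ‖X' ω‖ ≤ 1 := fun ω => by rcases hXv ω with h | h <;> simp [h]
  have hYn : ∀ ω, ‖Y' ω‖ ≤ 1 := fun ω => by rcases hYv ω with h | h <;> simp [h]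
  have iX : Integrable X' P :=
    memLp_one_iff_integrable.mp (MemLp.of_bound hX'.aestronglyMeasurable 1 (ae_of_all _ hXn))
  have iY : Integrable Y' P :=
    memLp_one_iff_integrable.mp (MemLp.of_bound hY'.aestronglyMeasurable 1 (ae_of_all _ hYn))
  have iXY : Integrable (fun ω => X' ω * Y' ω) P :=
    memLp_one_iff_integrable.mp (MemLp.of_bound (hX'.mul hY').aestronglyMeasurable 1
      (ae_of_all _ fun ω => by
        have := mul_le_mul (hXn ω) (hYn ω) (norm_nonneg _) (by norm_num)
        simpa [norm_mul] using this))
  set Z := MeasureTheory.condExp m P X' with hZdef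
  have E1 : ∫ ω, X' ω * Y' ω ∂P = ∫ ω, Z ω * Z ω ∂P := by
    rw [← integral_condExp hm (f := fun ω => X' ω * Y' ω)]
    refine integral_congr_ae (hfact.trans ?_)
    filter_upwards [hsym] with ω h
    rw [← h]
  have E3 : ∫ ω, X' ω ∂P = ∫ ω, Z ω ∂P := (integral_condExp hm).symm
  have E4 : ∫ ω, Y' ω ∂P = ∫ ω, Z ω ∂P := by
    rw [← integral_condExp hm (f := Y')]
    exact integral_congr_ae hsym.symm
  -- Z is bounded by 1 a.e.
  have hle : Z ≤ᵐ[P] fun _ => (1:ℝ) := by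
    have h := condExp_mono (m := m) iX (integrable_const (1:ℝ))
      (ae_of_all _ fun ω => by rcases hXv ω with h | h <;> simp [h] <;> norm_num)
    rwa [condExp_const hm (1:ℝ)] at h
  have hge : (fun _ => (-1:ℝ)) ≤ᵐ[P] Z := by
    have h := condExp_mono (m := m) (integrable_const (-1:ℝ)) iX
      (ae_of_all _ fun ω => by rcases hXv ω with h | h <;> simp [h] <;> norm_num)
    rwa [condExp_const hm (-1:ℝ)] at h
  have hZ2 : MemLp Z 2 P := by
    refine MemLp.of_bound ((stronglyMeasurable_condExp.mono hm).aestronglyMeasurable) 1 ?_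
    filter_upwards [hle, hge] with ω h1 h2
    rw [Real.norm_eq_abs, abs_le]
    exact ⟨h2, h1⟩
  have hvar := variance_nonneg Z P
  rw [variance_eq_sub hZ2] at hvar
  have h2 : ∫ x, (Z ^ 2) x ∂P = ∫ ω, Z ω * Z ω ∂P := by
    refine integral_congr_ae (ae_of_all _ fun ω => ?_)
    simp [pow_two]
  rw [E1, E3, E4]
  nlinarith [hvar, h2]

lemma SZ.law {Ω : Type*} [MeasurableSpace Ω] (μ : Measure Ω) [IsProbabilityMeasure μ]
    (X Y : Ω → ℝ) (hX : Measurable X) (hY : Measurable Y)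
    (hXval : ∀ ω, X ω = 1 ∨ X ω = -1) (hYval : ∀ ω, Y ω = 1 ∨ Y ω = -1) :
    Measure.map (fun ω => (X ω, Y ω)) μ =
      μ ({ω | X ω = 1} ∩ {ω | Y ω = 1}) • Measure.dirac ((1:ℝ), (1:ℝ)) +
      μ ({ω | X ω = 1} ∩ {ω | Y ω = 1}ᶜ) • Measure.dirac ((1:ℝ), (-1:ℝ)) +
      μ ({ω | X ω = 1}ᶜ ∩ {ω | Y ω = 1}) • Measure.dirac ((-1:ℝ), (1:ℝ)) +
      μ ({ω | X ω = 1}ᶜ ∩ {ω | Y ω = 1}ᶜ) • Measure.dirac ((-1:ℝ), (-1:ℝ)) := by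
  have hA : MeasurableSet {ω | X ω = 1} := hX (measurableSet_singleton 1)
  have hB : MeasurableSet {ω | Y ω = 1} := hY (measurableSet_singleton 1)
  ext s hs
  rw [Measure.map_apply (hX.prodMk hY) hs]
  set T := (fun ω => (X ω, Y ω)) ⁻¹' s with hT
  have split : μ T = μ (T ∩ ({ω | X ω = 1} ∩ {ω | Y ω = 1}))
      + μ (T ∩ ({ω | X ω = 1} ∩ {ω | Y ω = 1}ᶜ))
      + μ (T ∩ ({ω | X ω = 1}ᶜ ∩ {ω | Y ω = 1}))
      + μ (T ∩ ({ω | X ω = 1}ᶜ ∩ {ω | Y ω = 1}ᶜ)) := by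
    have h1 : μ T = μ (T ∩ {ω | X ω = 1}) + μ (T ∩ {ω | X ω = 1}ᶜ) := by
      rw [← measure_inter_add_diff T hA, Set.diff_eq]
    have h2 : μ (T ∩ {ω | X ω = 1}) = μ (T ∩ ({ω | X ω = 1} ∩ {ω | Y ω = 1}))
        + μ (T ∩ ({ω | X ω = 1} ∩ {ω | Y ω = 1}ᶜ)) := by
      rw [← measure_inter_add_diff (T ∩ {ω | X ω = 1}) hB, Set.diff_eq, Set.inter_assoc,
        Set.inter_assoc]
    have h3 : μ (T ∩ {ω | X ω = 1}ᶜ) = μ (T ∩ ({ω | X ω = 1}ᶜ ∩ {ω | Y ω = 1}))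
        + μ (T ∩ ({ω | X ω = 1}ᶜ ∩ {ω | Y ω = 1}ᶜ)) := by
      rw [← measure_inter_add_diff (T ∩ {ω | X ω = 1}ᶜ) hB, Set.diff_eq, Set.inter_assoc,
        Set.inter_assoc]
    rw [h1, h2, h3]; ring
  have hval : ∀ (u v : ℝ) (hu : ∀ ω, X ω = 1 ∨ X ω = -1), True := fun _ _ _ => trivial
  -- each piece
  have piece : ∀ (E : Set Ω) (pt : ℝ × ℝ), (∀ ω ∈ E, (X ω, Y ω) = pt) →
      μ (T ∩ E) = μ E * s.indicator 1 pt := by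
    intro E pt hpt
    by_cases hmem : pt ∈ s
    · have : T ∩ E = E := by
        apply Set.inter_eq_right.mpr
        intro ω hω
        simp only [hT, Set.mem_preimage]
        rw [hpt ω hω]; exact hmem
      rw [this, Set.indicator_of_mem hmem]; simp
    · have : T ∩ E = ∅ := by
        ext ω; simp only [Set.mem_inter_iff, Set.mem_empty_iff_false, iff_false]
        rintro ⟨hω1, hω2⟩
        exact hmem (by rw [← hpt ω hω2]; exact hω1)
      rw [this, Set.indicator_of_notMem hmem]; simp
  have hXc : ∀ ω, ω ∈ {ω | X ω = 1}ᶜ → X ω = -1 := fun ω h => by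
    rcases hXval ω with h1 | h1
    · exact absurd h1 h
    · exact h1
  have hYc : ∀ ω, ω ∈ {ω | Y ω = 1}ᶜ → Y ω = -1 := fun ω h => by
    rcases hYval ω with h1 | h1
    · exact absurd h1 h
    · exact h1
  rw [split,
    piece _ ((1:ℝ), (1:ℝ)) (fun ω hω => by simp only [Set.mem_inter_iff, Set.mem_setOf_eq] at hω; rw [hω.1, hω.2]),
    piece _ ((1:ℝ), (-1:ℝ)) (fun ω hω => by rw [hω.1, hYc ω hω.2]),
    piece _ ((-1:ℝ), (1:ℝ)) (fun ω hω => by rw [hXc ω hω.1, hω.2]),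
    piece _ ((-1:ℝ), (-1:ℝ)) (fun ω hω => by rw [hXc ω hω.1, hYc ω hω.2])]
  simp [Measure.dirac_apply' _ hs]

lemma SZ.condexp_char (P : Measure (Fin 6)) [IsProbabilityMeasure P] (Λ : Fin 6 → ℝ)
    (ψ : ℝ → ℝ) (hψ : Measurable ψ) (f : Fin 6 → ℝ)
    (heq : ∀ t : Set ℝ, MeasurableSet t →
      ∫ x in Λ ⁻¹' t, ψ (Λ x) ∂P = ∫ x in Λ ⁻¹' t, f x ∂P) :
    (fun x => ψ (Λ x)) =ᵐ[P]
      MeasureTheory.condExp (MeasurableSpace.comap Λ inferInstance) P f := by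
  have hΛ : Measurable Λ := fun _ _ => trivial
  refine ae_eq_condExp_of_forall_setIntegral_eq hΛ.comap_le Integrable.of_finite
    (fun s _ _ => Integrable.of_finite.integrableOn)
    (fun s hs _ => ?_)
    (StronglyMeasurable.aestronglyMeasurable (Measurable.stronglyMeasurable (hψ.comp (measurable_iff_comap_le.mpr le_rfl))))
  obtain ⟨t, ht, rfl⟩ := hs
  exact heq t ht

lemma SZ.construct (p q r : ℝ) (hp : 0 ≤ p) (hq : 0 ≤ q) (hrr : 0 ≤ r)
    (hsum : p + q + q + r = 1) (hA : 0 < p + q) (hB : 0 < q + r)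
    (hD : 0 ≤ p * r - q * q) :
    ∃ (P : Measure (Fin 6)), IsProbabilityMeasure P ∧
    ∃ X' Y' Λ : Fin 6 → ℝ,
      Measurable X' ∧ Measurable Y' ∧ Measurable Λ ∧
      (∀ ω, X' ω = 1 ∨ X' ω = -1) ∧ (∀ ω, Y' ω = 1 ∨ Y' ω = -1) ∧
      Measure.map (fun ω => (X' ω, Y' ω)) P =
        ENNReal.ofReal p • Measure.dirac ((1:ℝ), (1:ℝ)) +
        ENNReal.ofReal q • Measure.dirac ((1:ℝ), (-1:ℝ)) +
        ENNReal.ofReal q • Measure.dirac ((-1:ℝ), (1:ℝ)) +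
        ENNReal.ofReal r • Measure.dirac ((-1:ℝ), (-1:ℝ)) ∧
      (MeasureTheory.condExp (MeasurableSpace.comap Λ inferInstance) P
          (fun ω => X' ω * Y' ω)
        =ᵐ[P] fun ω =>
          MeasureTheory.condExp (MeasurableSpace.comap Λ inferInstance) P X' ω *
          MeasureTheory.condExp (MeasurableSpace.comap Λ inferInstance) P Y' ω) ∧
      (MeasureTheory.condExp (MeasurableSpace.comap Λ inferInstance) P X'
        =ᵐ[P] MeasureTheory.condExp (MeasurableSpace.comap Λ inferInstance) P Y') := by
  classical
  have hr' : r = 1 - p - q - q := by linarith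
  subst hr'
  have hb : (0:ℝ) < 1 - p - q := by linarith
  have ha : (0:ℝ) < p + q := hA
  -- weights
  set w : Fin 6 → ℝ := ![(p * (1 - p - q - q) - q * q) / (1 - p - q),
    (p * (1 - p - q - q) - q * q) / (p + q),
    q * (p + q) / (1 - p - q), q, q, q * (1 - p - q) / (p + q)] with hwdef
  have hw0 : w 0 = (p * (1 - p - q - q) - q * q) / (1 - p - q) := rfl
  have hw1 : w 1 = (p * (1 - p - q - q) - q * q) / (p + q) := rfl
  have hw2 : w 2 = q * (p + q) / (1 - p - q) := rfl
  have hw3 : w 3 = q := rfl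
  have hw4 : w 4 = q := rfl
  have hw5 : w 5 = q * (1 - p - q) / (p + q) := rfl
  have hDq : 0 ≤ p * (1 - p - q - q) - q * q := hD
  have hwnn : ∀ i, 0 ≤ w i := by
    intro i
    fin_cases i
    · exact div_nonneg hDq hb.le
    · exact div_nonneg hDq ha.le
    · exact div_nonneg (mul_nonneg hq ha.le) hb.le
    · exact hq
    · exact hq
    · exact div_nonneg (mul_nonneg hq hb.le) ha.le
  set P : Measure (Fin 6) :=
    ∑ i ∈ Finset.univ, ENNReal.ofReal (w i) • Measure.dirac i with hPdef
  have hPapp : ∀ s : Set (Fin 6),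
      P s = ∑ i : Fin 6, ENNReal.ofReal (w i) * s.indicator 1 i := by
    intro s
    rw [hPdef]
    simp [Measure.coe_finset_sum, Finset.sum_apply, Measure.smul_apply, smul_eq_mul,
      Measure.dirac_apply]
  have hwsum : w 0 + w 1 + w 2 + w 3 + w 4 + w 5 = 1 := by
    rw [hw0, hw1, hw2, hw3, hw4, hw5]
    field_simp
    ring
  have hprob : IsProbabilityMeasure P := by
    constructor
    rw [hPapp Set.univ]
    simp only [Set.indicator_univ, Pi.one_apply, mul_one]
    rw [← ENNReal.ofReal_sum_of_nonneg (fun i _ => hwnn i), Fin.sum_univ_six, hwsum,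
      ENNReal.ofReal_one]
  have hPsingle : ∀ i : Fin 6, P {i} = ENNReal.ofReal (w i) := by
    intro i
    rw [hPapp]
    refine (Finset.sum_eq_single i (fun j _ hj => ?_) (fun h => absurd (Finset.mem_univ i) h)).trans ?_
    · rw [Set.indicator_of_notMem (by simp [hj]), mul_zero]
    · rw [Set.indicator_of_mem (by simp), Pi.one_apply, mul_one]
  have hI : ∀ f : Fin 6 → ℝ, ∫ x, f x ∂P = ∑ i : Fin 6, w i * f i := by
    intro f
    rw [integral_fintype Integrable.of_finite]
    exact Finset.sum_congr rfl fun i _ => by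
      rw [measureReal_def, hPsingle i, ENNReal.toReal_ofReal (hwnn i), smul_eq_mul]
  have hIs : ∀ (f : Fin 6 → ℝ) (s : Set (Fin 6)),
      ∫ x in s, f x ∂P = ∑ i : Fin 6, s.indicator (fun j => w j * f j) i := by
    intro f s
    have hms : MeasurableSet s := trivial
    rw [← integral_indicator hms, hI]
    exact Finset.sum_congr rfl fun i _ => by
      by_cases h : i ∈ s <;>
        simp [Set.indicator_of_mem, Set.indicator_of_notMem, h]
  -- the random variables
  set X' : Fin 6 → ℝ := ![1, -1, 1, 1, -1, -1] with hX'def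
  set Y' : Fin 6 → ℝ := ![1, -1, 1, -1, 1, -1] with hY'def
  set L : Fin 6 → ℝ := ![1, -1, 0, 0, 0, 0] with hLdef
  have hmX : Measurable X' := fun _ _ => trivial
  have hmY : Measurable Y' := fun _ _ => trivial
  have hmL : Measurable L := fun _ _ => trivial
  have hXv : ∀ i, X' i = 1 ∨ X' i = -1 := by
    intro i; fin_cases i
    · exact Or.inl rfl
    · exact Or.inr rfl
    · exact Or.inl rfl
    · exact Or.inl rfl
    · exact Or.inr rfl
    · exact Or.inr rfl
  have hYv : ∀ i, Y' i = 1 ∨ Y' i = -1 := by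
    intro i; fin_cases i
    · exact Or.inl rfl
    · exact Or.inr rfl
    · exact Or.inl rfl
    · exact Or.inr rfl
    · exact Or.inl rfl
    · exact Or.inr rfl
  -- map equality
  have hmap : Measure.map (fun ω => (X' ω, Y' ω)) P =
      ENNReal.ofReal p • Measure.dirac ((1:ℝ), (1:ℝ)) +
      ENNReal.ofReal q • Measure.dirac ((1:ℝ), (-1:ℝ)) +
      ENNReal.ofReal q • Measure.dirac ((-1:ℝ), (1:ℝ)) +
      ENNReal.ofReal (1 - p - q - q) • Measure.dirac ((-1:ℝ), (-1:ℝ)) := by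
    ext s hs
    rw [Measure.map_apply (show Measurable fun ω : Fin 6 => (X' ω, Y' ω) from fun _ _ => trivial) hs, hPapp]
    have hind : ∀ i : Fin 6,
        ((fun ω => (X' ω, Y' ω)) ⁻¹' s).indicator (1 : Fin 6 → ENNReal) i =
          s.indicator 1 (X' i, Y' i) := fun i => rfl
    rw [Fin.sum_univ_six]
    simp only [hind]
    have v0 : (X' 0, Y' 0) = ((1:ℝ), (1:ℝ)) := rfl
    have v1 : (X' 1, Y' 1) = ((-1:ℝ), (-1:ℝ)) := rfl
    have v2 : (X' 2, Y' 2) = ((1:ℝ), (1:ℝ)) := rfl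
    have v3 : (X' 3, Y' 3) = ((1:ℝ), (-1:ℝ)) := rfl
    have v4 : (X' 4, Y' 4) = ((-1:ℝ), (1:ℝ)) := rfl
    have v5 : (X' 5, Y' 5) = ((-1:ℝ), (-1:ℝ)) := rfl
    rw [v0, v1, v2, v3, v4, v5]
    simp only [Measure.add_apply, Measure.smul_apply, smul_eq_mul, Measure.dirac_apply]
    have e11 : ENNReal.ofReal p = ENNReal.ofReal (w 0) + ENNReal.ofReal (w 2) := by
      rw [← ENNReal.ofReal_add (hwnn 0) (hwnn 2)]
      congr 1
      rw [hw0, hw2]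
      field_simp
      ring
    have e00 : ENNReal.ofReal (1 - p - q - q) =
        ENNReal.ofReal (w 1) + ENNReal.ofReal (w 5) := by
      rw [← ENNReal.ofReal_add (hwnn 1) (hwnn 5)]
      congr 1
      rw [hw1, hw5]
      field_simp
      ring
    rw [e11, e00, hw3, hw4]
    ring
  -- conditional expectations
  set tv : ℝ := (p + q) - (1 - p - q) with htvdef
  set ψ1 : ℝ → ℝ := fun x => if x = 1 then 1 else if x = -1 then -1 else tv with hψ1def
  set ψ2 : ℝ → ℝ := fun x => if x = 1 then 1 else if x = -1 then 1 else tv * tv with hψ2def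
  have hψ1m : Measurable ψ1 :=
    Measurable.ite measurableSet_eq measurable_const
      (Measurable.ite measurableSet_eq measurable_const measurable_const)
  have hψ2m : Measurable ψ2 :=
    Measurable.ite measurableSet_eq measurable_const
      (Measurable.ite measurableSet_eq measurable_const measurable_const)
  have hψ21 : ∀ y : ℝ, ψ2 y = ψ1 y * ψ1 y := by
    intro y
    rw [hψ1def, hψ2def]
    by_cases h1 : y = 1
    · simp [h1]
    · by_cases h2 : y = -1
      · subst h2; norm_num
      · simp [h1, h2]
  -- values of ψ1 ∘ L
  have hL0 : L 0 = 1 := rfl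
  have hL1 : L 1 = -1 := rfl
  have hL2 : L 2 = 0 := rfl
  have hL3 : L 3 = 0 := rfl
  have hL4 : L 4 = 0 := rfl
  have hL5 : L 5 = 0 := rfl
  have hψ1_1 : ψ1 1 = 1 := by rw [hψ1def]; norm_num
  have hψ1_m1 : ψ1 (-1) = -1 := by rw [hψ1def]; norm_num
  have hψ1_0 : ψ1 0 = tv := by rw [hψ1def]; norm_num
  have hψ2_1 : ψ2 1 = 1 := by rw [hψ2def]; norm_num
  have hψ2_m1 : ψ2 (-1) = 1 := by rw [hψ2def]; norm_num
  have hψ2_0 : ψ2 0 = tv * tv := by rw [hψ2def]; norm_num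
  -- set-integral computations
  haveI := hprob
  have hmem0 : ∀ t : Set ℝ, ((0:Fin 6) ∈ L ⁻¹' t) = ((1:ℝ) ∈ t) := fun _ => rfl
  have hmem1 : ∀ t : Set ℝ, ((1:Fin 6) ∈ L ⁻¹' t) = ((-1:ℝ) ∈ t) := fun _ => rfl
  have hmem2 : ∀ t : Set ℝ, ((2:Fin 6) ∈ L ⁻¹' t) = ((0:ℝ) ∈ t) := fun _ => rfl
  have hmem3 : ∀ t : Set ℝ, ((3:Fin 6) ∈ L ⁻¹' t) = ((0:ℝ) ∈ t) := fun _ => rfl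
  have hmem4 : ∀ t : Set ℝ, ((4:Fin 6) ∈ L ⁻¹' t) = ((0:ℝ) ∈ t) := fun _ => rfl
  have hmem5 : ∀ t : Set ℝ, ((5:Fin 6) ∈ L ⁻¹' t) = ((0:ℝ) ∈ t) := fun _ => rfl
  have hgrp : ∀ (f : Fin 6 → ℝ) (t : Set ℝ), ∫ x in L ⁻¹' t, f x ∂P =
      (if (1:ℝ) ∈ t then w 0 * f 0 else 0) + (if (-1:ℝ) ∈ t then w 1 * f 1 else 0) +
      (if (0:ℝ) ∈ t then w 2 * f 2 + w 3 * f 3 + w 4 * f 4 + w 5 * f 5 else 0) := by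
    classical
    intro f t
    rw [hIs, Fin.sum_univ_six]
    simp only [Set.indicator_apply, hmem0 t, hmem1 t, hmem2 t, hmem3 t, hmem4 t, hmem5 t]
    by_cases h1 : (1:ℝ) ∈ t <;> by_cases h2 : (-1:ℝ) ∈ t <;> by_cases h3 : (0:ℝ) ∈ t <;>
      simp [h1, h2, h3] <;> ring
  have hsetint : ∀ (f g : Fin 6 → ℝ), f 0 = g 0 → f 1 = g 1 →
      (w 2 * f 2 + w 3 * f 3 + w 4 * f 4 + w 5 * f 5
        = w 2 * g 2 + w 3 * g 3 + w 4 * g 4 + w 5 * g 5) →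
      ∀ t : Set ℝ, MeasurableSet t →
        ∫ x in L ⁻¹' t, f x ∂P = ∫ x in L ⁻¹' t, g x ∂P := by
    intro f g h0 h1 hG t _
    rw [hgrp, hgrp, h0, h1, hG]
  have hcX : (fun x => ψ1 (L x)) =ᵐ[P]
      MeasureTheory.condExp (MeasurableSpace.comap L inferInstance) P X' := by
    refine SZ.condexp_char P L ψ1 hψ1m X' (hsetint _ _ ?_ ?_ ?_)
    · show ψ1 (L 0) = X' 0; rw [hL0, hψ1_1]; rfl
    · show ψ1 (L 1) = X' 1; rw [hL1, hψ1_m1]; rfl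
    · show w 2 * ψ1 (L 2) + w 3 * ψ1 (L 3) + w 4 * ψ1 (L 4) + w 5 * ψ1 (L 5)
        = w 2 * X' 2 + w 3 * X' 3 + w 4 * X' 4 + w 5 * X' 5
      rw [hL2, hL3, hL4, hL5, hψ1_0,
        show X' 2 = 1 from rfl, show X' 3 = 1 from rfl,
        show X' 4 = -1 from rfl, show X' 5 = -1 from rfl,
        hw2, hw3, hw4, hw5, htvdef]
      field_simp
      ring
  have hcY : (fun x => ψ1 (L x)) =ᵐ[P]
      MeasureTheory.condExp (MeasurableSpace.comap L inferInstance) P Y' := by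
    refine SZ.condexp_char P L ψ1 hψ1m Y' (hsetint _ _ ?_ ?_ ?_)
    · show ψ1 (L 0) = Y' 0; rw [hL0, hψ1_1]; rfl
    · show ψ1 (L 1) = Y' 1; rw [hL1, hψ1_m1]; rfl
    · show w 2 * ψ1 (L 2) + w 3 * ψ1 (L 3) + w 4 * ψ1 (L 4) + w 5 * ψ1 (L 5)
        = w 2 * Y' 2 + w 3 * Y' 3 + w 4 * Y' 4 + w 5 * Y' 5
      rw [hL2, hL3, hL4, hL5, hψ1_0,
        show Y' 2 = 1 from rfl, show Y' 3 = -1 from rfl,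
        show Y' 4 = 1 from rfl, show Y' 5 = -1 from rfl,
        hw2, hw3, hw4, hw5, htvdef]
      field_simp
      ring
  have hcXY : (fun x => ψ2 (L x)) =ᵐ[P]
      MeasureTheory.condExp (MeasurableSpace.comap L inferInstance) P
        (fun ω => X' ω * Y' ω) := by
    refine SZ.condexp_char P L ψ2 hψ2m _ (hsetint _ _ ?_ ?_ ?_)
    · show ψ2 (L 0) = X' 0 * Y' 0
      rw [hL0, hψ2_1]; norm_num [show X' 0 = 1 from rfl, show Y' 0 = 1 from rfl]
    · show ψ2 (L 1) = X' 1 * Y' 1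
      rw [hL1, hψ2_m1]; norm_num [show X' 1 = -1 from rfl, show Y' 1 = -1 from rfl]
    · show w 2 * ψ2 (L 2) + w 3 * ψ2 (L 3) + w 4 * ψ2 (L 4) + w 5 * ψ2 (L 5)
        = w 2 * (X' 2 * Y' 2) + w 3 * (X' 3 * Y' 3) + w 4 * (X' 4 * Y' 4) + w 5 * (X' 5 * Y' 5)
      rw [hL2, hL3, hL4, hL5, hψ2_0]
      norm_num [show X' 2 = 1 from rfl, show X' 3 = 1 from rfl,
        show X' 4 = -1 from rfl, show X' 5 = -1 from rfl,
        show Y' 2 = 1 from rfl, show Y' 3 = -1 from rfl,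
        show Y' 4 = 1 from rfl, show Y' 5 = -1 from rfl]
      rw [hw2, hw3, hw4, hw5, htvdef]
      field_simp
      ring
  refine ⟨P, hprob, X', Y', L, hmX, hmY, hmL, hXv, hYv, hmap, ?_, ?_⟩
  · refine hcXY.symm.trans ?_
    filter_upwards [hcX, hcY] with ω e1 e2
    have e1' : ψ1 (L ω) = MeasureTheory.condExp (MeasurableSpace.comap L inferInstance) P X' ω := e1
    have e2' : ψ1 (L ω) = MeasureTheory.condExp (MeasurableSpace.comap L inferInstance) P Y' ω := e2
    show ψ2 (L ω) = _
    rw [hψ21]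
    congr 1
  · exact hcX.symm.trans hcY

/-- Suppes–Zanotti theorem: for two exchangeable `±1`-valued random variables `X, Y` with
positive variances, a symmetric factorizing hidden variable exists (on some probability
space carrying a copy `(X', Y')` of `(X, Y)`) iff the covariance of `X` and `Y` is
nonnegative. -/
theorem suppes_zanotti_symmetric_hidden_variable
    {Ω : Type*} [MeasurableSpace Ω] (μ : Measure Ω) [IsProbabilityMeasure μ]
    (X Y : Ω → ℝ) (hX : Measurable X) (hY : Measurable Y)
    (hXval : ∀ ω, X ω = 1 ∨ X ω = -1) (hYval : ∀ ω, Y ω = 1 ∨ Y ω = -1)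
    (hXvar : 0 < variance X μ) (hYvar : 0 < variance Y μ)
    (hexch : μ ({ω | X ω = 1} ∩ {ω | Y ω = -1}) = μ ({ω | X ω = -1} ∩ {ω | Y ω = 1})) :
    (∃ (Ω' : Type) (mΩ' : MeasurableSpace Ω') (P : @Measure Ω' mΩ')
      (_ : @IsProbabilityMeasure Ω' mΩ' P) (X' Y' : Ω' → ℝ) (Λ : Ω' → ℝ),
      Measurable[mΩ'] X' ∧ Measurable[mΩ'] Y' ∧ Measurable[mΩ'] Λ ∧
      (∀ ω, X' ω = 1 ∨ X' ω = -1) ∧ (∀ ω, Y' ω = 1 ∨ Y' ω = -1) ∧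
      -- the joint law of (X', Y') equals the joint law of (X, Y)
      @Measure.map Ω' (ℝ × ℝ) mΩ' _ (fun ω => (X' ω, Y' ω)) P
        = Measure.map (fun ω => (X ω, Y ω)) μ ∧
      -- factorization: E[X'Y' | σ(Λ)] = E[X' | σ(Λ)] ⬝ E[Y' | σ(Λ)] a.s.
      (MeasureTheory.condExp (MeasurableSpace.comap Λ inferInstance) P
          (fun ω => X' ω * Y' ω)
        =ᵐ[P] fun ω =>
          MeasureTheory.condExp (MeasurableSpace.comap Λ inferInstance) P X' ω *
          MeasureTheory.condExp (MeasurableSpace.comap Λ inferInstance) P Y' ω) ∧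
      -- symmetry: E[X' | σ(Λ)] = E[Y' | σ(Λ)] a.s.
      (MeasureTheory.condExp (MeasurableSpace.comap Λ inferInstance) P X'
        =ᵐ[P] MeasureTheory.condExp (MeasurableSpace.comap Λ inferInstance) P Y')) ↔
    0 ≤ (∫ ω, X ω * Y ω ∂μ) - (∫ ω, X ω ∂μ) * (∫ ω, Y ω ∂μ) := by
  have hA : MeasurableSet {ω | X ω = 1} := hX (measurableSet_singleton 1)
  have hB : MeasurableSet {ω | Y ω = 1} := hY (measurableSet_singleton 1)
  have hXc : {ω | X ω = -1} = {ω | X ω = 1}ᶜ := by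
    ext ω
    simp only [Set.mem_setOf_eq, Set.mem_compl_iff]
    constructor
    · intro h h1; rw [h1] at h; norm_num at h
    · intro h; exact (hXval ω).resolve_left h
  have hYc : {ω | Y ω = -1} = {ω | Y ω = 1}ᶜ := by
    ext ω
    simp only [Set.mem_setOf_eq, Set.mem_compl_iff]
    constructor
    · intro h h1; rw [h1] at h; norm_num at h
    · intro h; exact (hYval ω).resolve_left h
  have hexch' : μ ({ω | X ω = 1} ∩ {ω | Y ω = 1}ᶜ) = μ ({ω | X ω = 1}ᶜ ∩ {ω | Y ω = 1}) := by
    rw [← hYc, ← hXc]; exact hexch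
  set p : ℝ := (μ ({ω | X ω = 1} ∩ {ω | Y ω = 1})).toReal with hpdef
  set q : ℝ := (μ ({ω | X ω = 1} ∩ {ω | Y ω = 1}ᶜ)).toReal with hqdef
  set r : ℝ := (μ ({ω | X ω = 1}ᶜ ∩ {ω | Y ω = 1}ᶜ)).toReal with hrdef
  have hq' : (μ ({ω | X ω = 1}ᶜ ∩ {ω | Y ω = 1})).toReal = q := by rw [hqdef, hexch']
  have hp0 : 0 ≤ p := ENNReal.toReal_nonneg
  have hq0 : 0 ≤ q := ENNReal.toReal_nonneg
  have hr0 : 0 ≤ r := ENNReal.toReal_nonneg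
  -- marginals
  have hmargX : (μ {ω | X ω = 1}).toReal = p + q := by
    rw [hpdef, hqdef, ← ENNReal.toReal_add (measure_ne_top _ _) (measure_ne_top _ _)]
    congr 1
    rw [← measure_inter_add_diff {ω | X ω = 1} hB, Set.diff_eq]
  have hmargY : (μ {ω | Y ω = 1}).toReal = p + q := by
    rw [hpdef, ← hq', ← ENNReal.toReal_add (measure_ne_top _ _) (measure_ne_top _ _)]
    congr 1
    rw [← measure_inter_add_diff {ω | Y ω = 1} hA, Set.diff_eq, Set.inter_comm,
      Set.inter_comm {ω | Y ω = 1}]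
  have hmargXc : (μ {ω | X ω = 1}ᶜ).toReal = q + r := by
    rw [← hq', hrdef, ← ENNReal.toReal_add (measure_ne_top _ _) (measure_ne_top _ _)]
    congr 1
    rw [← measure_inter_add_diff {ω | X ω = 1}ᶜ hB, Set.diff_eq]
  have hsum : p + q + q + r = 1 := by
    have h1 : μ {ω | X ω = 1} + μ {ω | X ω = 1}ᶜ = 1 := by
      rw [measure_add_measure_compl hA]
      exact measure_univ
    have h2 : (μ {ω | X ω = 1}).toReal + (μ {ω | X ω = 1}ᶜ).toReal = 1 := by
      rw [← ENNReal.toReal_add (measure_ne_top _ _) (measure_ne_top _ _), h1]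
      simp
    rw [hmargX, hmargXc] at h2
    linarith
  -- integrals
  have hEX : ∫ ω, X ω ∂μ = 2 * (p + q) - 1 := by
    rw [SZ.integral_pm μ X hA hXval, hmargX]
  have hEY : ∫ ω, Y ω ∂μ = 2 * (p + q) - 1 := by
    rw [SZ.integral_pm μ Y hB hYval, hmargY]
  have hXYval : ∀ ω, X ω * Y ω = 1 ∨ X ω * Y ω = -1 := by
    intro ω
    rcases hXval ω with h1 | h1 <;> rcases hYval ω with h2 | h2 <;>
      rw [h1, h2] <;> norm_num
  have hXYset : {ω | X ω * Y ω = 1} =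
      ({ω | X ω = 1} ∩ {ω | Y ω = 1}) ∪ ({ω | X ω = 1}ᶜ ∩ {ω | Y ω = 1}ᶜ) := by
    ext ω
    simp only [Set.mem_setOf_eq, Set.mem_union, Set.mem_inter_iff, Set.mem_compl_iff]
    rcases hXval ω with h1 | h1 <;> rcases hYval ω with h2 | h2 <;>
      rw [h1, h2] <;> norm_num
  have hEXY : ∫ ω, X ω * Y ω ∂μ = 2 * (p + r) - 1 := by
    have hms : MeasurableSet {ω | X ω * Y ω = 1} := (hX.mul hY) (measurableSet_singleton 1)
    rw [SZ.integral_pm μ (fun ω => X ω * Y ω) hms hXYval]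
    congr 1
    rw [hXYset, measure_union ?hdisj (hA.compl.inter hB.compl)]
    · rw [ENNReal.toReal_add (measure_ne_top _ _) (measure_ne_top _ _)]
    case hdisj =>
      refine Set.disjoint_left.mpr fun ω h1 h2 => ?_
      exact h2.1 h1.1
  -- positive variance consequences
  have hsqX : ∫ ω, (X ^ 2) ω ∂μ = 1 := by
    have : ∀ ω, (X ^ 2) ω = 1 := fun ω => by
      rcases hXval ω with h | h <;> simp [Pi.pow_apply, h]
    rw [integral_congr_ae (Filter.EventuallyEq.of_eq (funext this))]
    simp
  have hmlX : MemLp X 2 μ := MemLp.of_bound hX.aestronglyMeasurable 1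
    (ae_of_all _ fun ω => by rcases hXval ω with h | h <;> simp [h])
  have hvarX : variance X μ = 1 - (2 * (p + q) - 1) ^ 2 := by
    rw [variance_eq_sub hmlX, hsqX, hEX]
  have hpq1 : 0 < p + q := by nlinarith [hXvar, hvarX]
  have hqr1 : 0 < q + r := by nlinarith [hXvar, hvarX, hsum]
  have hcov : (∫ ω, X ω * Y ω ∂μ) - (∫ ω, X ω ∂μ) * (∫ ω, Y ω ∂μ)
      = 4 * (p * r - q * q) := by
    rw [hEXY, hEX, hEY]
    linear_combination (2 - 4 * p) * hsum
  constructor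
  · rintro ⟨Ω', mΩ', P, hPP, X', Y', Λ, hmX', hmY', hmΛ, hXv', hYv', hmapeq, hfact, hsym⟩
    have t1 : ∫ z : ℝ × ℝ, z.1 ∂(Measure.map (fun ω => (X ω, Y ω)) μ) = ∫ ω, X ω ∂μ :=
      integral_map (hX.prodMk hY).aemeasurable measurable_fst.aestronglyMeasurable
    have t2 : ∫ z : ℝ × ℝ, z.2 ∂(Measure.map (fun ω => (X ω, Y ω)) μ) = ∫ ω, Y ω ∂μ :=
      integral_map (hX.prodMk hY).aemeasurable measurable_snd.aestronglyMeasurable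
    have t3 : ∫ z : ℝ × ℝ, z.1 * z.2 ∂(Measure.map (fun ω => (X ω, Y ω)) μ)
        = ∫ ω, X ω * Y ω ∂μ :=
      integral_map (hX.prodMk hY).aemeasurable
        (measurable_fst.mul measurable_snd).aestronglyMeasurable
    have t1' : ∫ z : ℝ × ℝ, z.1 ∂(@Measure.map Ω' (ℝ × ℝ) mΩ' _ (fun ω => (X' ω, Y' ω)) P)
        = ∫ ω, X' ω ∂P :=
      integral_map (Measurable.aemeasurable (Measurable.prodMk hmX' hmY'))
        measurable_fst.aestronglyMeasurable
    have t2' : ∫ z : ℝ × ℝ, z.2 ∂(@Measure.map Ω' (ℝ × ℝ) mΩ' _ (fun ω => (X' ω, Y' ω)) P)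
        = ∫ ω, Y' ω ∂P :=
      integral_map (Measurable.aemeasurable (Measurable.prodMk hmX' hmY'))
        measurable_snd.aestronglyMeasurable
    have t3' : ∫ z : ℝ × ℝ, z.1 * z.2 ∂(@Measure.map Ω' (ℝ × ℝ) mΩ' _ (fun ω => (X' ω, Y' ω)) P)
        = ∫ ω, X' ω * Y' ω ∂P :=
      integral_map (Measurable.aemeasurable (Measurable.prodMk hmX' hmY'))
        (measurable_fst.mul measurable_snd).aestronglyMeasurable
    rw [← t1, ← t2, ← t3, ← hmapeq, t1', t2', t3']
    exact @SZ.forward_core Ω' mΩ' P hPP X' Y' Λ hmX' hmY' hmΛ hXv' hYv' hfact hsym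
  · intro hcov0
    have hD : 0 ≤ p * r - q * q := by
      rw [hcov] at hcov0; linarith
    obtain ⟨P, hPP, X', Y', L, hm1, hm2, hm3, hv1, hv2, hmap, hfact, hsym⟩ :=
      SZ.construct p q r hp0 hq0 hr0 hsum hpq1 hqr1 hD
    refine ⟨Fin 6, inferInstance, P, hPP, X', Y', L, hm1, hm2, hm3, hv1, hv2, ?_, hfact, hsym⟩
    rw [hmap, SZ.law μ X Y hX hY hXval hYval]
    rw [show μ ({ω | X ω = 1} ∩ {ω | Y ω = 1}) = ENNReal.ofReal p from
        (ENNReal.ofReal_toReal (measure_ne_top _ _)).symm,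
      show μ ({ω | X ω = 1} ∩ {ω | Y ω = 1}ᶜ) = ENNReal.ofReal q from
        (ENNReal.ofReal_toReal (measure_ne_top _ _)).symm,
      show μ ({ω | X ω = 1}ᶜ ∩ {ω | Y ω = 1}) = ENNReal.ofReal q from by
        rw [hexch'.symm]; exact (ENNReal.ofReal_toReal (measure_ne_top _ _)).symm,
      show μ ({ω | X ω = 1}ᶜ ∩ {ω | Y ω = 1}ᶜ) = ENNReal.ofReal r from
        (ENNReal.ofReal_toReal (measure_ne_top _ _)).symm]
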